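/- arXiv:0709.2458 — 6 statements merged into one kernel-verified Lean document; each statement's English description precedes it below -/
import Mathlib

section
/- An n×n Hermitian complex matrix A is positive definite if and only if for every k with 1 ≤ k ≤ n, the sum of all k×k principal minors of A is positive. -/
/-!
A Hermitian matrix is positive definite iff its real eigenvalues `λ_i` are positive, and its
`k × k` principal minor sums are, up to the sign `(-1)^k`, coefficients of its characteristic
polynomial, i.e. the elementary symmetric functions `e_k(λ)`. Positive `λ_i` give positive `e_k`.
Conversely, if some `λ_i ≤ 0`, then `-λ_i ≥ 0` is a root of `∏ (X + λ_j) = ∑ e_k X^(n-k)`,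
although there every term on the right is nonnegative and the constant term `e_n` is positive.
-/

open scoped ComplexOrder

/-- The sum of all `k × k` principal minors of the matrix `A`. -/
noncomputable def principalMinorSum {n : ℕ} (A : Matrix (Fin n) (Fin n) ℂ) (k : ℕ) : ℂ :=
  ∑ s ∈ Finset.powersetCard k (Finset.univ : Finset (Fin n)),
    (A.submatrix (fun i : {x // x ∈ s} => (i : Fin n)) (fun j : {x // x ∈ s} => (j : Fin n))).det

open Polynomial

namespace Multiset

variable {R : Type*}

theorem esymm_map_ringHom {S : Type*} [CommSemiring R] [CommSemiring S] (f : R →+* S)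
    (s : Multiset R) (k : ℕ) : (s.map f).esymm k = f (s.esymm k) := by
  simp [esymm, powersetCard_map, map_map, map_multiset_sum, map_multiset_prod]

theorem esymm_pos [CommSemiring R] [PartialOrder R] [IsStrictOrderedRing R] {s : Multiset R}
    (hs : ∀ x ∈ s, 0 < x) {k : ℕ} (hk : k ≤ card s) : 0 < s.esymm k := by
  have hne : powersetCard k s ≠ 0 := by
    rw [← card_pos, card_powersetCard]
    exact Nat.choose_pos hk
  have hprod : ∀ t ∈ powersetCard k s, (0 : R) < t.prod := fun t ht =>
    prod_pos fun x hx => hs x (mem_of_le (mem_powersetCard.mp ht).1 hx)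
  simpa [esymm] using sum_lt_sum_of_nonempty hne hprod

theorem pos_of_esymm_pos [CommRing R] [LinearOrder R] [IsStrictOrderedRing R] {s : Multiset R}
    (h : ∀ k, 1 ≤ k → k ≤ card s → 0 < s.esymm k) {x : R} (hx : x ∈ s) : 0 < x := by
  by_contra! hx0
  have hvieta := congrArg (eval (-x)) (prod_X_add_C_eq_sum_esymm s)
  have hroot : eval (-x) (s.map fun r => X + C r).prod = 0 := by
    rw [eval_multiset_prod]
    exact prod_eq_zero (mem_map.mpr ⟨X + C x, mem_map_of_mem _ hx, by simp⟩)
  have hcard : 1 ≤ card s := card_pos_iff_exists_mem.mpr ⟨x, hx⟩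
  have hsum : 0 < ∑ j ∈ Finset.range (card s + 1), s.esymm j * (-x) ^ (card s - j) := by
    refine Finset.sum_pos' (fun j hj => ?_) ⟨card s, by simp, by simpa using h _ hcard le_rfl⟩
    have hneg : 0 ≤ -x := by linarith
    rcases j.eq_zero_or_pos with rfl | hj0
    · simp [esymm, hneg]
    · exact mul_nonneg (h j hj0 (by simpa [Nat.lt_succ_iff] using hj)).le (pow_nonneg hneg _)
  simp only [hroot, eval_finsetSum, eval_mul, eval_C, eval_pow, eval_X] at hvieta
  linarith

theorem forall_pos_iff_esymm_pos [CommRing R] [LinearOrder R] [IsStrictOrderedRing R]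
    {s : Multiset R} : (∀ x ∈ s, 0 < x) ↔ ∀ k, 1 ≤ k → k ≤ card s → 0 < s.esymm k :=
  ⟨fun hs _ _ hk => esymm_pos hs hk, fun h _ hx => pos_of_esymm_pos h hx⟩

end Multiset

theorem Matrix.IsHermitian.principalMinorSum_eq_esymm_eigenvalues {n : ℕ}
    {A : Matrix (Fin n) (Fin n) ℂ} (hA : A.IsHermitian) {k : ℕ} (hk : k ≤ n) :
    principalMinorSum A k = ((Finset.univ.val.map hA.eigenvalues).esymm k : ℂ) := by
  have hdeg : A.charpoly.natDegree = n := by simp [A.charpoly_natDegree_eq_dim]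
  have hminors := A.charpoly_coeff_eq_sum_minors k (by simpa using hk)
  have hvieta := coeff_eq_esymm_roots_of_card (p := A.charpoly)
    (by rw [hdeg, hA.roots_charpoly_eq_eigenvalues]; simp) (k := n - k) (by omega)
  rw [Fintype.card_fin, hvieta, A.charpoly_monic.leadingCoeff, hdeg, Nat.sub_sub_self hk,
    hA.roots_charpoly_eq_eigenvalues, one_mul] at hminors
  have hsigned := mul_left_cancel₀ (pow_ne_zero k (neg_ne_zero.mpr one_ne_zero)) hminors
  rw [principalMinorSum, ← hsigned, ← Multiset.map_map]
  exact Multiset.esymm_map_ringHom Complex.ofRealHom _ _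

theorem posDef_iff_principalMinorSums_pos {n : ℕ} (A : Matrix (Fin n) (Fin n) ℂ)
    (hA : A.IsHermitian) :
    A.PosDef ↔ ∀ k : ℕ, 1 ≤ k → k ≤ n → 0 < (principalMinorSum A k).re := by
  have hpos : A.PosDef ↔ ∀ x ∈ Finset.univ.val.map hA.eigenvalues, 0 < x := by
    simp [hA.posDef_iff_eigenvalues_pos]
  rw [hpos, Multiset.forall_pos_iff_esymm_pos, Multiset.card_map, Finset.card_val,
    Finset.card_univ, Fintype.card_fin]
  refine forall₂_congr fun k _ => forall_congr' fun hk => ?_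
  rw [hA.principalMinorSum_eq_esymm_eigenvalues hk, Complex.ofReal_re]
end

section
/- Let A = [[B, C],[C*, D]] be an n×n Hermitian matrix with B an invertible k×k block, and let A' = D − C*B⁻¹C be the Schur complement. For any l ≥ k, the sum of all l×l principal minors of A that contain the block B equals det(B) times the sum of all (l−k)×(l−k) principal minors of A'. -/
open Matrix

/-- The sum of all `l × l` principal minors of `A : Matrix (Fin k ⊕ Fin m)` whose index set
contains all of `Fin k` (i.e. that contain the leading block `B`). -/
noncomputable def minorSumContainingBlock {k m : ℕ}
    (A : Matrix (Fin k ⊕ Fin m) (Fin k ⊕ Fin m) ℂ) (l : ℕ) : ℂ :=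
  ∑ s ∈ (Finset.powersetCard l (Finset.univ : Finset (Fin k ⊕ Fin m))).filter
      (fun s => ∀ i : Fin k, Sum.inl i ∈ s),
    (A.submatrix (fun i : {x // x ∈ s} => (i : Fin k ⊕ Fin m))
      (fun j : {x // x ∈ s} => (j : Fin k ⊕ Fin m))).det

/-- The sum of all `j × j` principal minors of a matrix over `Fin m`. -/
noncomputable def principalMinorSum' {m : ℕ} (A : Matrix (Fin m) (Fin m) ℂ) (j : ℕ) : ℂ :=
  ∑ s ∈ Finset.powersetCard j (Finset.univ : Finset (Fin m)),
    (A.submatrix (fun i : {x // x ∈ s} => (i : Fin m)) (fun j : {x // x ∈ s} => (j : Fin m))).det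

theorem minorSum_containing_block_eq {k m : ℕ}
    (B : Matrix (Fin k) (Fin k) ℂ) (C : Matrix (Fin k) (Fin m) ℂ)
    (D : Matrix (Fin m) (Fin m) ℂ) (hB : B.IsHermitian) (hD : D.IsHermitian)
    (hBinv : IsUnit B) (l : ℕ) (hl : k ≤ l) :
    minorSumContainingBlock (Matrix.fromBlocks B C Cᴴ D) l
      = B.det * principalMinorSum' (D - Cᴴ * B⁻¹ * C) (l - k) := by
  obtain ⟨iB⟩ := hBinv.nonempty_invertible
  unfold minorSumContainingBlock principalMinorSum'
  rw [Finset.mul_sum]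
  refine Finset.sum_nbij' (fun s => s.toRight) (fun t => Finset.disjSum Finset.univ t)
    ?_ ?_ ?_ ?_ ?_
  · intro s hs
    simp only [Finset.mem_filter, Finset.mem_powersetCard_univ] at hs
    rw [Finset.mem_powersetCard_univ]
    have hleft : s.toLeft = Finset.univ := by
      ext i; simp [hs.2 i]
    have h2 := s.card_toLeft_add_card_toRight
    rw [hleft, Finset.card_univ, Fintype.card_fin, hs.1] at h2
    show s.toRight.card = l - k
    omega
  · intro t ht
    rw [Finset.mem_powersetCard_univ] at ht
    simp only [Finset.mem_filter, Finset.mem_powersetCard_univ, Finset.card_disjSum,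
      Finset.card_univ, Fintype.card_fin, ht]
    constructor
    · omega
    · intro i; simp
  · intro s hs
    simp only [Finset.mem_filter, Finset.mem_powersetCard_univ] at hs
    have hleft : s.toLeft = Finset.univ := by
      ext i; simp [hs.2 i]
    conv_rhs => rw [← s.toLeft_disjSum_toRight, hleft]
  · intro t ht
    simp
  · intro s hs
    simp only [Finset.mem_filter, Finset.mem_powersetCard_univ] at hs
    -- reindex the submatrix as a fromBlocks
    set t := s.toRight with htdef
    have hleft : s.toLeft = Finset.univ := by
      ext i; simp [hs.2 i]
    have hsval : s = Finset.disjSum Finset.univ t := by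
      conv_lhs => rw [← s.toLeft_disjSum_toRight, hleft]
    -- equiv
    have hf : Function.Bijective (Sum.elim (fun i : Fin k => (⟨Sum.inl i, hs.2 i⟩ : {x // x ∈ s}))
        (fun j : {x // x ∈ t} => ⟨Sum.inr (j : Fin m), by rw [hsval]; simp⟩)) := by
      constructor
      · rintro (a|a) (b|b) h <;> simp_all
      · rintro ⟨(x|x), hx⟩
        · exact ⟨Sum.inl x, rfl⟩
        · refine ⟨Sum.inr ⟨x, ?_⟩, rfl⟩
          rw [hsval] at hx; simpa using hx
    set e := Equiv.ofBijective _ hf with he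
    rw [← Matrix.det_submatrix_equiv_self e]
    have hform : ((fromBlocks B C Cᴴ D).submatrix
        (fun i : {x // x ∈ s} => (i : Fin k ⊕ Fin m))
        (fun j : {x // x ∈ s} => (j : Fin k ⊕ Fin m))).submatrix e e
        = fromBlocks B (C.submatrix id (fun j : {x // x ∈ t} => (j : Fin m)))
            (Cᴴ.submatrix (fun i : {x // x ∈ t} => (i : Fin m)) id)
            (D.submatrix (fun i : {x // x ∈ t} => (i : Fin m))
              (fun j : {x // x ∈ t} => (j : Fin m))) := by
      ext (i|i) (j|j) <;> rfl
    rw [hform, det_fromBlocks₁₁, invOf_eq_nonsing_inv]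
    congr 2
end

section
/- Let A = [[B, C],[C*, D]] be an n×n Hermitian matrix with B invertible. Then the number of positive eigenvalues of A equals the number of positive eigenvalues of B plus the number of positive eigenvalues of the Schur complement D − C*B⁻¹C; similarly for negative eigenvalues. -/
open Matrix

/-!
Completing the square, `A = Pᴴ * fromBlocks B 0 0 S * P` with `P = [[1, B⁻¹C], [0, 1]]`
unipotent and `S = D - CᴴB⁻¹C`. Diagonalizing `B` and `S` by unitaries, `A` becomes congruent
to the real diagonal matrix of the eigenvalues of `B` and of `S`, while the spectral theorem makes
it congruent to the diagonal of its own eigenvalues. By Sylvester's law of inertia, two real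
diagonal matrices congruent to the same Hermitian matrix have equally many positive and equally
many negative entries. We take this law from the signature of real quadratic forms: viewing
`ℂⁿ` as `ℝ²ⁿ`, the form `x ↦ Re (x* M x)` is a weighted sum of squares in which every diagonal
entry of `M` occurs twice.
-/

open Finset QuadraticMap

lemma Finset.card_filter_sumElim {ι κ β : Type*} [Fintype ι] [Fintype κ] (p : β → Prop)
    [DecidablePred p] (f : ι → β) (g : κ → β) :
    #{i | p (Sum.elim f g i)} = #{i | p (f i)} + #{i | p (g i)} := by
  simp only [card_filter, Fintype.sum_sum_type, Sum.elim_inl, Sum.elim_inr]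
  rfl

lemma Set.ncard_setOf_fst {ι κ : Type*} [Fintype ι] [Fintype κ] (p : ι → Prop)
    [DecidablePred p] :
    {x : ι × κ | p x.1}.ncard = #{i | p i} * Fintype.card κ := by
  have hprod : {x : ι × κ | p x.1} = {i | p i} ×ˢ Set.univ := by ext; simp
  rw [hprod, Set.ncard_prod, Set.ncard_univ, Nat.card_eq_fintype_card,
    Set.ncard_eq_toFinset_card']
  simp

/-- `x ↦ ((i, 0) ↦ Re xᵢ, (i, 1) ↦ Im xᵢ)`. -/
noncomputable def Complex.piEquivRealPi (n : Type*) : (n → ℂ) ≃ₗ[ℝ] (n × Fin 2 → ℝ) :=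
  LinearEquiv.piCongrRight (fun _ => Complex.basisOneI.equivFun) ≪≫ₗ
    (LinearEquiv.curry ℝ ℝ n (Fin 2)).symm

lemma Complex.weightedSumSquares_piEquivRealPi {n : Type*} [Fintype n] (μ : n → ℝ)
    (y : n → ℂ) :
    weightedSumSquares ℝ (fun p : n × Fin 2 => μ p.1) (piEquivRealPi n y) =
      ∑ i, μ i * ‖y i‖ ^ 2 := by
  simp [weightedSumSquares_apply, piEquivRealPi, Fintype.sum_prod_type, Fin.sum_univ_two,
    Complex.sq_norm, Complex.normSq_apply, mul_add]

namespace Matrix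

variable {α l m n o : Type*} [Fintype m] [Fintype n]

lemma star_dotProduct_conjTranspose_mul_mul_mulVec [NonUnitalSemiring α] [StarRing α]
    (R : Matrix m n α) (N : Matrix m m α) (x : n → α) :
    star x ⬝ᵥ (Rᴴ * N * R) *ᵥ x = star (R *ᵥ x) ⬝ᵥ N *ᵥ (R *ᵥ x) := by
  rw [← mulVec_mulVec, ← mulVec_mulVec, dotProduct_mulVec, ← star_mulVec]

variable [DecidableEq m] [DecidableEq n]

lemma fromBlocks_conjTranspose_eq_of_invertible₁₁ [CommRing α] [StarRing α]
    {A : Matrix n n α} (hA : A.IsHermitian) [Invertible A] (B : Matrix n m α)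
    (D : Matrix m m α) :
    fromBlocks A B Bᴴ D = (fromBlocks 1 (A⁻¹ * B) 0 1)ᴴ * fromBlocks A 0 0 (D - Bᴴ * A⁻¹ * B) *
      fromBlocks 1 (A⁻¹ * B) 0 1 := by
  rw [fromBlocks_conjTranspose, conjTranspose_mul, conjTranspose_nonsing_inv, hA.eq,
    ← invOf_eq_nonsing_inv]
  simpa using fromBlocks_eq_of_invertible₁₁ A B Bᴴ D

lemma fromBlocks_conjTranspose_mul_diagonal_mul [Semiring α] [StarRing α]
    (R₁ : Matrix n l α) (R₂ : Matrix m o α) (d₁ : n → α) (d₂ : m → α) :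
    fromBlocks (R₁ᴴ * diagonal d₁ * R₁) 0 0 (R₂ᴴ * diagonal d₂ * R₂) =
      (fromBlocks R₁ 0 0 R₂)ᴴ * diagonal (Sum.elim d₁ d₂) * fromBlocks R₁ 0 0 R₂ := by
  rw [← fromBlocks_diagonal, fromBlocks_conjTranspose, fromBlocks_multiply, fromBlocks_multiply]
  simp

section RCLike

variable {𝕜 : Type*} [RCLike 𝕜]

lemma re_star_dotProduct_diagonal_mulVec (μ : n → ℝ) (y : n → 𝕜) :
    RCLike.re (star y ⬝ᵥ diagonal (RCLike.ofReal ∘ μ) *ᵥ y) = ∑ i, μ i * ‖y i‖ ^ 2 := by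
  simp only [dotProduct, mulVec_diagonal, Pi.star_apply, Function.comp_apply, map_sum]
  refine Finset.sum_congr rfl fun i _ => ?_
  rw [mul_left_comm, RCLike.star_def, RCLike.conj_mul, ← RCLike.ofReal_pow,
    ← RCLike.ofReal_mul, RCLike.ofReal_re]

lemma IsHermitian.exists_eq_conjTranspose_mul_diagonal_mul {M : Matrix n n 𝕜}
    (hM : M.IsHermitian) :
    ∃ R : Matrix n n 𝕜, IsUnit R ∧ M = Rᴴ * diagonal (RCLike.ofReal ∘ hM.eigenvalues) * R := by
  refine ⟨star (hM.eigenvectorUnitary : Matrix n n 𝕜),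
    Unitary.isUnit_coe (U := star hM.eigenvectorUnitary), ?_⟩
  rw [← star_eq_conjTranspose, star_star]
  exact hM.spectral_theorem

end RCLike

lemma exists_weightedSumSquares_eq_re_star_dotProduct {R : Matrix n n ℂ} (hR : IsUnit R)
    (μ : n → ℝ) :
    ∃ e : (n → ℂ) ≃ₗ[ℝ] (n × Fin 2 → ℝ), ∀ x, weightedSumSquares ℝ (fun p => μ p.1) (e x) =
      (star x ⬝ᵥ (Rᴴ * diagonal (RCLike.ofReal ∘ μ) * R) *ᵥ x).re := by
  refine ⟨(R.toLinearEquiv' hR.invertible).restrictScalars ℝ ≪≫ₗ Complex.piEquivRealPi n,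
    fun x => ?_⟩
  rw [star_dotProduct_conjTranspose_mul_mul_mulVec]
  exact (Complex.weightedSumSquares_piEquivRealPi μ _).trans
    (re_star_dotProduct_diagonal_mulVec μ _).symm

lemma equivalent_weightedSumSquares_of_conjTranspose_mul_diagonal_mul_eq
    {R₁ R₂ : Matrix n n ℂ} (hR₁ : IsUnit R₁) (hR₂ : IsUnit R₂) {μ ν : n → ℝ}
    (h : R₁ᴴ * diagonal (RCLike.ofReal ∘ μ) * R₁ = R₂ᴴ * diagonal (RCLike.ofReal ∘ ν) * R₂) :
    Equivalent (weightedSumSquares ℝ fun p : n × Fin 2 => μ p.1)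
      (weightedSumSquares ℝ fun p : n × Fin 2 => ν p.1) := by
  obtain ⟨e₁, he₁⟩ := exists_weightedSumSquares_eq_re_star_dotProduct hR₁ μ
  obtain ⟨e₂, he₂⟩ := exists_weightedSumSquares_eq_re_star_dotProduct hR₂ ν
  refine ⟨{ toLinearEquiv := e₁.symm ≪≫ₗ e₂, map_app' := fun y => ?_ }⟩
  change weightedSumSquares ℝ _ (e₂ (e₁.symm y)) = _
  rw [he₂, ← h, ← he₁, e₁.apply_symm_apply]

theorem card_pos_eq_and_card_neg_eq_of_conjTranspose_mul_diagonal_mul_eq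
    {R₁ R₂ : Matrix n n ℂ} (hR₁ : IsUnit R₁) (hR₂ : IsUnit R₂) {μ ν : n → ℝ}
    (h : R₁ᴴ * diagonal (RCLike.ofReal ∘ μ) * R₁ = R₂ᴴ * diagonal (RCLike.ofReal ∘ ν) * R₂) :
    #{i | 0 < μ i} = #{i | 0 < ν i} ∧ #{i | μ i < 0} = #{i | ν i < 0} := by
  have hequiv := equivalent_weightedSumSquares_of_conjTranspose_mul_diagonal_mul_eq hR₁ hR₂ h
  have hpos := hequiv.sigPos_eq
  have hneg := hequiv.sigNeg_eq
  rw [QuadraticForm.sigPos_weightedSumSquares, QuadraticForm.sigPos_weightedSumSquares,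
    Set.ncard_setOf_fst (fun i => 0 < μ i), Set.ncard_setOf_fst (fun i => 0 < ν i)] at hpos
  rw [QuadraticForm.sigNeg_weightedSumSquares, QuadraticForm.sigNeg_weightedSumSquares,
    Set.ncard_setOf_fst (fun i => μ i < 0), Set.ncard_setOf_fst (fun i => ν i < 0)] at hneg
  exact ⟨Nat.eq_of_mul_eq_mul_right Fintype.card_pos hpos,
    Nat.eq_of_mul_eq_mul_right Fintype.card_pos hneg⟩

end Matrix

theorem eigenvalue_counts_block_general {k m : ℕ}
    (B : Matrix (Fin k) (Fin k) ℂ) (C : Matrix (Fin k) (Fin m) ℂ)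
    (D : Matrix (Fin m) (Fin m) ℂ) (hB : B.IsHermitian)
    (hBinv : IsUnit B)
    (hA : (Matrix.fromBlocks B C Cᴴ D).IsHermitian)
    (hS : (D - Cᴴ * B⁻¹ * C).IsHermitian) :
    ((Finset.univ.filter fun i => 0 < hA.eigenvalues i).card
        = (Finset.univ.filter fun i => 0 < hB.eigenvalues i).card
          + (Finset.univ.filter fun i => 0 < hS.eigenvalues i).card)
    ∧ ((Finset.univ.filter fun i => hA.eigenvalues i < 0).card
        = (Finset.univ.filter fun i => hB.eigenvalues i < 0).card
          + (Finset.univ.filter fun i => hS.eigenvalues i < 0).card) := by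
  have := hBinv.invertible
  obtain ⟨RA, hRA, hA_eq⟩ := hA.exists_eq_conjTranspose_mul_diagonal_mul
  obtain ⟨RB, hRB, hB_eq⟩ := hB.exists_eq_conjTranspose_mul_diagonal_mul
  obtain ⟨RS, hRS, hS_eq⟩ := hS.exists_eq_conjTranspose_mul_diagonal_mul
  let R := fromBlocks RB 0 0 RS * fromBlocks 1 (B⁻¹ * C) 0 1
  have hR : IsUnit R := (isUnit_fromBlocks_zero₂₁.2 ⟨hRB, hRS⟩).mul
    (isUnit_fromBlocks_zero₂₁.2 ⟨isUnit_one, isUnit_one⟩)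
  have hA_congr : fromBlocks B C Cᴴ D =
      Rᴴ * diagonal (RCLike.ofReal ∘ Sum.elim hB.eigenvalues hS.eigenvalues) * R := by
    have hblock := fromBlocks_conjTranspose_mul_diagonal_mul RB RS
      (RCLike.ofReal ∘ hB.eigenvalues) (RCLike.ofReal ∘ hS.eigenvalues)
    rw [← hB_eq, ← hS_eq] at hblock
    rw [fromBlocks_conjTranspose_eq_of_invertible₁₁ hB, hblock, Sum.comp_elim, conjTranspose_mul]
    simp only [R, Matrix.mul_assoc]
  obtain ⟨hpos, hneg⟩ := card_pos_eq_and_card_neg_eq_of_conjTranspose_mul_diagonal_mul_eq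
    hRA hR (hA_eq.symm.trans hA_congr)
  rw [Finset.card_filter_sumElim ((0 : ℝ) < ·)] at hpos
  rw [Finset.card_filter_sumElim (· < (0 : ℝ))] at hneg
  exact ⟨hpos, hneg⟩

theorem eigenvalue_counts_block {k m : ℕ}
    (B : Matrix (Fin k) (Fin k) ℂ) (C : Matrix (Fin k) (Fin m) ℂ)
    (D : Matrix (Fin m) (Fin m) ℂ) (hB : B.IsHermitian) (hD : D.IsHermitian)
    (hBinv : IsUnit B)
    (hA : (Matrix.fromBlocks B C Cᴴ D).IsHermitian)
    (hS : (D - Cᴴ * B⁻¹ * C).IsHermitian) :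
    ((Finset.univ.filter fun i => 0 < hA.eigenvalues i).card
        = (Finset.univ.filter fun i => 0 < hB.eigenvalues i).card
          + (Finset.univ.filter fun i => 0 < hS.eigenvalues i).card)
    ∧ ((Finset.univ.filter fun i => hA.eigenvalues i < 0).card
        = (Finset.univ.filter fun i => hB.eigenvalues i < 0).card
          + (Finset.univ.filter fun i => hS.eigenvalues i < 0).card) :=
  eigenvalue_counts_block_general B C D hB hBinv hA hS
end

section
/- A 3×3 Hermitian matrix A is positive definite if and only if a₁₁ > 0, P₁₂ + P₁₃ > 0, and det A > 0, where P₁₂ and P₁₃ are the 2×2 principal minors on rows/columns {1,2} and {1,3} respectively. -/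
/-!
Completing the square in the first coordinate gives, for Hermitian `A` and `x = (x₁, y)`,
`a₁₁ · x*Ax = |a₁₁ x₁ + ∑ⱼ a₁ⱼ yⱼ|² + y*Sy`, where `S = a₁₁ A' - c c*` with `A'` the trailing
principal submatrix and `c` the rest of the first column; so `A` is positive definite iff
`a₁₁ > 0` and `S` is. For a `3 × 3` matrix, `S` is a Hermitian `2 × 2` matrix with trace
`P₁₂ + P₁₃` and determinant `a₁₁ · det A`, and a Hermitian `2 × 2` matrix is positive definite
iff its trace and determinant are positive: a positive determinant forces the two (real)
diagonal entries to have the same sign.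
-/

open scoped ComplexOrder

namespace Matrix

variable {R : Type*} [CommRing R] {n : ℕ}

/-- `A 0 0` times the Schur complement of the entry `A 0 0`; the scaling avoids a division. -/
def scaledSchurComplement (A : Matrix (Fin (n + 1)) (Fin (n + 1)) R) :
    Matrix (Fin n) (Fin n) R :=
  A 0 0 • A.submatrix Fin.succ Fin.succ - vecMulVec (fun i ↦ A i.succ 0) (fun j ↦ A 0 j.succ)

lemma dotProduct_mulVec_fin_succ (A : Matrix (Fin (n + 1)) (Fin (n + 1)) R)
    (v w : Fin (n + 1) → R) :
    v ⬝ᵥ A *ᵥ w =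
      v 0 * A 0 0 * w 0 + v 0 * ((fun j ↦ A 0 j.succ) ⬝ᵥ Fin.tail w) +
        (Fin.tail v ⬝ᵥ fun i ↦ A i.succ 0) * w 0 +
        Fin.tail v ⬝ᵥ A.submatrix Fin.succ Fin.succ *ᵥ Fin.tail w := by
  simp only [dotProduct, mulVec, Fin.sum_univ_succ, Fin.tail, submatrix_apply,
    mul_add, Finset.mul_sum, Finset.sum_mul, Finset.sum_add_distrib, mul_assoc]
  ring

lemma dotProduct_mulVec_scaledSchurComplement (A : Matrix (Fin (n + 1)) (Fin (n + 1)) R)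
    (v w : Fin n → R) :
    v ⬝ᵥ A.scaledSchurComplement *ᵥ w =
      A 0 0 * (v ⬝ᵥ A.submatrix Fin.succ Fin.succ *ᵥ w) -
        (v ⬝ᵥ fun i ↦ A i.succ 0) * ((fun j ↦ A 0 j.succ) ⬝ᵥ w) := by
  simp only [scaledSchurComplement, sub_mulVec, smul_mulVec, vecMulVec_mulVec, op_smul_eq_smul,
    dotProduct_sub, dotProduct_smul, smul_eq_mul]
  ring

lemma det_scaledSchurComplement_fin_three (A : Matrix (Fin 3) (Fin 3) R) :
    A.scaledSchurComplement.det = A 0 0 * A.det := by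
  rw [det_fin_two, det_fin_three]
  simp only [scaledSchurComplement, sub_apply, smul_apply, submatrix_apply, vecMulVec_apply,
    smul_eq_mul, Fin.succ_zero_eq_one, Fin.succ_one_eq_two]
  ring

lemma IsHermitian.scaledSchurComplement [StarRing R] {A : Matrix (Fin (n + 1)) (Fin (n + 1)) R}
    (hA : A.IsHermitian) : A.scaledSchurComplement.IsHermitian := by
  refine IsHermitian.ext fun i j ↦ ?_
  simp only [Matrix.scaledSchurComplement, sub_apply, smul_apply, submatrix_apply,
    vecMulVec_apply, smul_eq_mul, star_sub, star_mul, hA.apply]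
  ring

lemma IsHermitian.mul_star_dotProduct_mulVec [StarRing R]
    {A : Matrix (Fin (n + 1)) (Fin (n + 1)) R} (hA : A.IsHermitian) (x : Fin (n + 1) → R) :
    A 0 0 * (star x ⬝ᵥ A *ᵥ x) =
      star (A 0 0 * x 0 + (fun j ↦ A 0 j.succ) ⬝ᵥ Fin.tail x) *
          (A 0 0 * x 0 + (fun j ↦ A 0 j.succ) ⬝ᵥ Fin.tail x) +
        star (Fin.tail x) ⬝ᵥ A.scaledSchurComplement *ᵥ Fin.tail x := by
  have ha : star (A 0 0) = A 0 0 := hA.apply 0 0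
  have hcol : (fun i : Fin n ↦ A i.succ 0) = star fun j ↦ A 0 j.succ :=
    funext fun i ↦ (hA.apply i.succ 0).symm
  have htail : Fin.tail (star x) = star (Fin.tail x) := rfl
  rw [dotProduct_mulVec_fin_succ, dotProduct_mulVec_scaledSchurComplement, hcol, htail,
    star_dotProduct_star, star_add, star_mul, ha, Pi.star_apply]
  ring

section RCLike

variable {𝕜 : Type*} [RCLike 𝕜]

theorem IsHermitian.posDef_iff_scaledSchurComplement_of_pos
    {A : Matrix (Fin (n + 1)) (Fin (n + 1)) 𝕜} (hA : A.IsHermitian) (ha : 0 < A 0 0) :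
    A.PosDef ↔ A.scaledSchurComplement.PosDef := by
  refine ⟨fun hA' ↦ .of_dotProduct_mulVec_pos hA.scaledSchurComplement fun y hy ↦ ?_,
    fun hS ↦ .of_dotProduct_mulVec_pos hA fun x hx ↦ ?_⟩
  · -- choose `x₀` so that the square vanishes
    set u := (fun j ↦ A 0 j.succ) ⬝ᵥ y
    have hu : A 0 0 * (-u / A 0 0) + u = 0 := by
      rw [mul_div_cancel₀ _ ha.ne', neg_add_cancel]
    have hx : (Fin.cons (-u / A 0 0) y : Fin (n + 1) → 𝕜) ≠ 0 :=
      fun h ↦ hy (funext fun j ↦ by simpa using congrFun h j.succ)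
    have key := hA.mul_star_dotProduct_mulVec (Fin.cons (-u / A 0 0) y)
    rw [Fin.cons_zero, Fin.tail_cons, hu, star_zero, zero_mul, zero_add] at key
    exact key ▸ mul_pos ha (hA'.dotProduct_mulVec_pos hx)
  · refine pos_of_mul_pos_right ?_ ha.le
    rw [hA.mul_star_dotProduct_mulVec]
    by_cases hy : Fin.tail x = 0
    · have hx₀ : x 0 ≠ 0 := fun h ↦ hx (funext fun i ↦ Fin.cases h (congrFun hy) i)
      simpa [hy] using star_mul_self_pos (.of_ne_zero (mul_ne_zero ha.ne' hx₀))
    · exact add_pos_of_nonneg_of_pos (star_mul_self_nonneg _) (hS.dotProduct_mulVec_pos hy)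

theorem IsHermitian.posDef_iff_scaledSchurComplement
    {A : Matrix (Fin (n + 1)) (Fin (n + 1)) 𝕜} (hA : A.IsHermitian) :
    A.PosDef ↔ 0 < A 0 0 ∧ A.scaledSchurComplement.PosDef :=
  ⟨fun h ↦ ⟨h.diag_pos, (hA.posDef_iff_scaledSchurComplement_of_pos h.diag_pos).mp h⟩,
    fun ⟨ha, hS⟩ ↦ (hA.posDef_iff_scaledSchurComplement_of_pos ha).mpr hS⟩

theorem IsHermitian.posDef_iff_fin_two {B : Matrix (Fin 2) (Fin 2) 𝕜} (hB : B.IsHermitian) :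
    B.PosDef ↔ 0 < B 0 0 ∧ 0 < B.det := by
  have hS : B.scaledSchurComplement = diagonal fun _ ↦ B.det := by
    ext i j
    fin_cases i; fin_cases j
    simp [Matrix.scaledSchurComplement, vecMulVec_apply, det_fin_two, mul_comm]
  rw [hB.posDef_iff_scaledSchurComplement, hS, posDef_diagonal_iff, Unique.forall_iff]

theorem IsHermitian.posDef_iff_trace_det_fin_two {B : Matrix (Fin 2) (Fin 2) 𝕜}
    (hB : B.IsHermitian) : B.PosDef ↔ 0 < B.trace ∧ 0 < B.det := by
  refine ⟨fun h ↦ ⟨h.trace_pos, h.det_pos⟩,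
    fun ⟨htr, hdet⟩ ↦ hB.posDef_iff_fin_two.mpr ⟨?_, hdet⟩⟩
  rw [trace_fin_two, ← hB.coe_re_apply_self 0, ← hB.coe_re_apply_self 1, ← RCLike.ofReal_add,
    RCLike.ofReal_pos] at htr
  rw [det_fin_two, ← hB.apply 0 1, ← hB.coe_re_apply_self 0, ← hB.coe_re_apply_self 1,
    RCLike.star_def, RCLike.conj_mul, ← RCLike.ofReal_pow, ← RCLike.ofReal_mul,
    ← RCLike.ofReal_sub, RCLike.ofReal_pos] at hdet
  rw [← hB.coe_re_apply_self 0, RCLike.ofReal_pos]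
  nlinarith [sq_nonneg ‖B 1 0‖]

end RCLike

end Matrix

theorem posDef_iff_crit_ii (A : Matrix (Fin 3) (Fin 3) ℂ) (hA : A.IsHermitian) :
    A.PosDef ↔
      (0 < (A 0 0).re ∧ 0 < ((A 0 0).re * (A 1 1).re - Complex.normSq (A 0 1)) + ((A 0 0).re * (A 2 2).re - Complex.normSq (A 0 2))) ∧ 0 < A.det.re := by
  have hdiag (i : Fin 3) : ((A i i).re : ℂ) = A i i := hA.coe_re_apply_self i
  have hdet : (A.det.re : ℂ) = A.det :=
    Complex.conj_eq_iff_re.mp (by rw [← Matrix.det_conjTranspose, hA.eq] : star A.det = A.det)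
  have htrace : A.scaledSchurComplement.trace =
      ((A 0 0).re * (A 1 1).re - Complex.normSq (A 0 1) +
        ((A 0 0).re * (A 2 2).re - Complex.normSq (A 0 2)) : ℝ) := by
    rw [Matrix.trace_fin_two]
    simp only [Matrix.scaledSchurComplement, Matrix.sub_apply, Matrix.smul_apply,
      Matrix.submatrix_apply, Matrix.vecMulVec_apply, smul_eq_mul, Fin.succ_zero_eq_one,
      Fin.succ_one_eq_two, ← hA.apply 0 1, ← hA.apply 0 2, Complex.ofReal_add,
      Complex.ofReal_sub, Complex.ofReal_mul, hdiag, Complex.normSq_eq_conj_mul_self,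
      ← Complex.star_def, star_star]
  rw [hA.posDef_iff_scaledSchurComplement, hA.scaledSchurComplement.posDef_iff_trace_det_fin_two,
    htrace, Matrix.det_scaledSchurComplement_fin_three, ← hdiag, ← hdet, ← Complex.ofReal_mul,
    Complex.zero_lt_real, Complex.zero_lt_real, Complex.zero_lt_real, and_assoc]
  exact and_congr_right fun ha ↦ and_congr_right' (mul_pos_iff_of_pos_left ha)
end

section
/- A 3×3 Hermitian matrix A is positive definite if and only if a₁₁ + a₂₂ > 0, P₁₂ > 0, and det A > 0, where P₁₂ = a₁₁a₂₂ − |a₁₂|². -/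
/-!
Completing squares: with `r = a₁₁` and `P = a₁₁a₂₂ - a₁₂a₂₁` the leading minors, the
congruence `r P • A = Uᴴ * diagonal (P, 1, r det A) * U` holds with `U` upper triangular of
determinant `r P`. So once `r, P > 0`, which is necessary since they are minors of a positive
definite matrix, `A` is positive definite exactly when `det A > 0`. For Hermitian `A` all three
minors are real, and `a₁₁ + a₂₂ > 0` together with `P > 0` forces `a₁₁ > 0`.
-/

open scoped ComplexOrder
open Complex ComplexConjugate Matrix

theorem Complex.zero_lt_iff_of_conj_eq {z : ℂ} (hz : conj z = z) : 0 < z ↔ 0 < z.re := by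
  simp [lt_def, conj_eq_iff_im.mp hz]

namespace Matrix

def upperFactorFinThree {R : Type*} [CommRing R] (A : Matrix (Fin 3) (Fin 3) R) :
    Matrix (Fin 3) (Fin 3) R :=
  !![A 0 0, A 0 1, A 0 2;
     0, A 0 0 * A 1 1 - A 0 1 * A 1 0, A 0 0 * A 1 2 - A 1 0 * A 0 2;
     0, 0, 1]

theorem det_upperFactorFinThree {R : Type*} [CommRing R] (A : Matrix (Fin 3) (Fin 3) R) :
    (upperFactorFinThree A).det = A 0 0 * (A.submatrix Fin.castSucc Fin.castSucc).det := by
  simp [upperFactorFinThree, det_fin_three, det_fin_two]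

theorem IsHermitian.smul_eq_conjTranspose_mul_diagonal_mul {R : Type*} [CommRing R] [StarRing R]
    {A : Matrix (Fin 3) (Fin 3) R} (hA : A.IsHermitian) :
    (A 0 0 * (A.submatrix Fin.castSucc Fin.castSucc).det) • A =
      (upperFactorFinThree A)ᴴ *
        diagonal ![(A.submatrix Fin.castSucc Fin.castSucc).det, 1, A 0 0 * A.det] *
          upperFactorFinThree A := by
  ext i j
  fin_cases i <;> fin_cases j <;>
    simp [upperFactorFinThree, mul_apply, Fin.sum_univ_three, det_fin_three, det_fin_two,
      hA.apply] <;> ring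

variable {𝕜 : Type*} [RCLike 𝕜] {A : Matrix (Fin 3) (Fin 3) 𝕜}

theorem IsHermitian.posDef_of_leadingMinors_pos_fin_three (hA : A.IsHermitian)
    (h₁ : 0 < A 0 0) (h₂ : 0 < (A.submatrix Fin.castSucc Fin.castSucc).det) (h₃ : 0 < A.det) :
    A.PosDef := by
  have hc : 0 < A 0 0 * (A.submatrix Fin.castSucc Fin.castSucc).det := mul_pos h₁ h₂
  have hU : IsUnit (upperFactorFinThree A) := by
    rw [isUnit_iff_isUnit_det, det_upperFactorFinThree]
    exact hc.ne'.isUnit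
  have hD :
      (diagonal ![(A.submatrix Fin.castSucc Fin.castSucc).det, 1, A 0 0 * A.det]).PosDef := by
    refine posDef_diagonal_iff.2 fun i => ?_
    fin_cases i
    exacts [h₂, one_pos, mul_pos h₁ h₃]
  have := (hD.conjTranspose_mul_mul_same (mulVec_injective_of_isUnit hU)).smul (inv_pos.2 hc)
  rwa [← hA.smul_eq_conjTranspose_mul_diagonal_mul, smul_smul, inv_mul_cancel₀ hc.ne',
    one_smul] at this

theorem IsHermitian.posDef_iff_leadingMinors_pos_fin_three (hA : A.IsHermitian) :
    A.PosDef ↔ 0 < A 0 0 ∧ 0 < (A.submatrix Fin.castSucc Fin.castSucc).det ∧ 0 < A.det :=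
  ⟨fun h => ⟨h.diag_pos, (h.submatrix (Fin.castSucc_injective 2)).det_pos, h.det_pos⟩,
    fun ⟨h₁, h₂, h₃⟩ => hA.posDef_of_leadingMinors_pos_fin_three h₁ h₂ h₃⟩

end Matrix

theorem posDef_iff_crit_iii (A : Matrix (Fin 3) (Fin 3) ℂ) (hA : A.IsHermitian) :
    A.PosDef ↔
      (0 < (A 0 0).re + (A 1 1).re ∧ 0 < ((A 0 0).re * (A 1 1).re - Complex.normSq (A 0 1))) ∧ 0 < A.det.re := by
  have hminor : (A.submatrix Fin.castSucc Fin.castSucc).det =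
      ((A 0 0).re * (A 1 1).re - normSq (A 0 1) : ℝ) := by
    rw [det_fin_two]
    simp [← hA.apply 1 0, mul_conj, conj_eq_iff_re.mp (hA.apply 0 0),
      conj_eq_iff_re.mp (hA.apply 1 1)]
  have hdet : conj A.det = A.det := by rw [starRingEnd_apply, ← det_conjTranspose, hA]
  rw [hA.posDef_iff_leadingMinors_pos_fin_three, zero_lt_iff_of_conj_eq (hA.apply 0 0), hminor,
    zero_lt_real, zero_lt_iff_of_conj_eq hdet]
  have hb := normSq_nonneg (A 0 1)
  constructor
  · rintro ⟨h₁, h₂, h₃⟩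
    exact ⟨⟨by nlinarith, h₂⟩, h₃⟩
  · rintro ⟨⟨h₁, h₂⟩, h₃⟩
    exact ⟨by nlinarith, h₂, h₃⟩
end

section
/- A 3×3 Hermitian matrix A is positive definite if and only if a₁₁ + a₂₂ > 0, P₁₂ + P₁₃ + P₂₃ > 0, and det A > 0, where Pᵢⱼ = aᵢᵢaⱼⱼ − |aᵢⱼ|² are the 2×2 principal minors. -/
/-!
Positive definiteness means that the eigenvalues `x, y, z` of `A` are positive. Comparing `tr A`
and `tr A²` with the eigenvalues shows `xy + xz + yz = P₁₂ + P₁₃ + P₂₃`, and `xyz = det A`.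
The smallest eigenvalue `x` satisfies `x • 1 ≤ A`, so `x ≤ a₃₃` and `y + z ≥ tr A - a₃₃ = a₁₁ + a₂₂`.
Once `y + z > 0`, positivity of `xy + xz + yz = x (y + z) + yz` and of `xyz` forces `x, y, z > 0`.
-/

open scoped ComplexOrder MatrixOrder

lemma pos_of_add_pos_of_esymm_pos {x y z : ℝ} (hyz : 0 < y + z)
    (h₂ : 0 < x * y + x * z + y * z) (h₃ : 0 < x * y * z) : 0 < x ∧ 0 < y ∧ 0 < z := by
  have hx : 0 < x := by
    by_contra! hx
    have : 0 < y * z := by nlinarith [mul_nonpos_of_nonpos_of_nonneg hx hyz.le]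
    nlinarith [mul_nonpos_of_nonpos_of_nonneg hx this.le]
  have hyz' : 0 < y * z := by
    rw [mul_assoc] at h₃
    exact (pos_iff_pos_of_mul_pos h₃).mp hx
  refine ⟨hx, ?_, ?_⟩ <;> nlinarith

lemma forall_pos_of_sum_sub_pos_of_esymm_pos (l : Fin 3 → ℝ) {k : Fin 3}
    (hk : 0 < ∑ i, l i - l k) (h₂ : 0 < l 0 * l 1 + l 0 * l 2 + l 1 * l 2)
    (h₃ : 0 < l 0 * l 1 * l 2) : ∀ i, 0 < l i := by
  suffices 0 < l 0 ∧ 0 < l 1 ∧ 0 < l 2 from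
    Fin.forall_fin_succ.mpr ⟨this.1, Fin.forall_fin_two.mpr this.2⟩
  rw [Fin.sum_univ_three] at hk
  match k with
  | 0 => exact pos_of_add_pos_of_esymm_pos (by linarith) h₂ h₃
  | 1 =>
    obtain ⟨h1, h0, h2⟩ := pos_of_add_pos_of_esymm_pos (x := l 1) (y := l 0) (z := l 2)
      (by linarith) (by linarith) (by linarith)
    exact ⟨h0, h1, h2⟩
  | 2 =>
    obtain ⟨h2, h0, h1⟩ := pos_of_add_pos_of_esymm_pos (x := l 2) (y := l 0) (z := l 1)
      (by linarith) (by linarith) (by linarith)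
    exact ⟨h0, h1, h2⟩

namespace Matrix

section RCLike

variable {𝕜 n : Type*} [RCLike 𝕜] [Fintype n] [DecidableEq n] {A : Matrix n n 𝕜}

lemma IsHermitian.trace_mul_self_eq_sum_eigenvalues_sq (hA : A.IsHermitian) :
    (A * A).trace = ∑ i, (hA.eigenvalues i : 𝕜) ^ 2 := by
  conv_lhs => rw [hA.spectral_theorem, ← map_mul, Unitary.conjStarAlgAut_apply, trace_mul_cycle,
    Unitary.coe_star_mul_self, one_mul, diagonal_mul_diagonal, trace_diagonal]
  simp [sq]

lemma IsHermitian.exists_eigenvalues_le_re_apply_self (hA : A.IsHermitian) (i : n) :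
    ∃ k, hA.eigenvalues k ≤ RCLike.re (A i i) := by
  obtain ⟨k, -, hk⟩ := Finset.exists_mem_eq_inf' ⟨i, Finset.mem_univ i⟩ hA.eigenvalues
  refine ⟨k, ?_⟩
  have hle : algebraMap ℝ (Matrix n n 𝕜) (hA.eigenvalues k) ≤ A := by
    apply algebraMap_le_of_le_spectrum (ha := hA.isSelfAdjoint)
    rw [hA.spectrum_real_eq_range_eigenvalues]
    rintro _ ⟨j, rfl⟩
    exact hk ▸ Finset.inf'_le _ (Finset.mem_univ j)
  have := (le_iff.mp hle).diag_nonneg (i := i)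
  rw [sub_apply, algebraMap_eq_diagonal, diagonal_apply_eq, sub_nonneg, RCLike.le_iff_re_im] at this
  simpa using this.1

end RCLike

section Complex

lemma IsHermitian.det_submatrix_pair {n : Type*} {A : Matrix n n ℂ} (hA : A.IsHermitian)
    (i j : n) :
    (A.submatrix ![i, j] ![i, j]).det = ((A i i).re * (A j j).re - Complex.normSq (A i j) : ℝ) := by
  simp only [det_fin_two, submatrix_apply, cons_val_zero, cons_val_one]
  conv_lhs => rw [← hA.apply j i, ← hA.coe_re_apply_self i, ← hA.coe_re_apply_self j,
    Complex.star_def, Complex.mul_conj]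
  push_cast
  rfl

lemma PosDef.re_mul_re_sub_normSq_pos {n : Type*} {A : Matrix n n ℂ} (hA : A.PosDef) {i j : n}
    (hij : i ≠ j) : 0 < (A i i).re * (A j j).re - Complex.normSq (A i j) := by
  have := (hA.submatrix (e := ![i, j])
    (by simp [Function.Injective, Fin.forall_fin_two, hij, hij.symm])).det_pos
  rwa [hA.isHermitian.det_submatrix_pair, Complex.zero_lt_real] at this

variable {A : Matrix (Fin 3) (Fin 3) ℂ}

lemma IsHermitian.re_trace_mul_self_fin_three (hA : A.IsHermitian) :
    (A * A).trace.re = (A 0 0).re ^ 2 + (A 1 1).re ^ 2 + (A 2 2).re ^ 2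
      + 2 * (Complex.normSq (A 0 1) + Complex.normSq (A 0 2) + Complex.normSq (A 1 2)) := by
  simp only [trace_fin_three, mul_apply, Fin.sum_univ_three]
  conv_lhs => rw [← hA.apply 1 0, ← hA.apply 2 0, ← hA.apply 2 1, ← hA.coe_re_apply_self 0,
    ← hA.coe_re_apply_self 1, ← hA.coe_re_apply_self 2]
  simp only [RCLike.re_to_complex, Complex.coe_algebraMap, RCLike.star_def, Complex.add_re,
    Complex.mul_re, Complex.ofReal_re, Complex.ofReal_im, mul_zero, sub_zero, Complex.conj_re,
    Complex.conj_im, mul_neg, sub_neg_eq_add, neg_mul, Complex.normSq_apply]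
  ring

lemma IsHermitian.sum_eigenvalues_fin_three (hA : A.IsHermitian) :
    hA.eigenvalues 0 + hA.eigenvalues 1 + hA.eigenvalues 2 =
      (A 0 0).re + (A 1 1).re + (A 2 2).re := by
  simpa [trace_fin_three, Fin.sum_univ_three] using
    (congrArg Complex.re hA.trace_eq_sum_eigenvalues).symm

lemma IsHermitian.esymm_two_eigenvalues_fin_three (hA : A.IsHermitian) :
    hA.eigenvalues 0 * hA.eigenvalues 1 + hA.eigenvalues 0 * hA.eigenvalues 2
      + hA.eigenvalues 1 * hA.eigenvalues 2 =
      ((A 0 0).re * (A 1 1).re - Complex.normSq (A 0 1))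
      + ((A 0 0).re * (A 2 2).re - Complex.normSq (A 0 2))
      + ((A 1 1).re * (A 2 2).re - Complex.normSq (A 1 2)) := by
  have h₂ := congrArg Complex.re hA.trace_mul_self_eq_sum_eigenvalues_sq
  rw [hA.re_trace_mul_self_fin_three] at h₂
  simp only [Complex.coe_algebraMap, ← Complex.ofReal_pow, Fin.sum_univ_three, Complex.add_re,
    Complex.ofReal_re] at h₂
  linear_combination (hA.eigenvalues 0 + hA.eigenvalues 1 + hA.eigenvalues 2
    + (A 0 0).re + (A 1 1).re + (A 2 2).re) / 2 * hA.sum_eigenvalues_fin_three + h₂ / 2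

lemma IsHermitian.re_det_eq_prod_eigenvalues (hA : A.IsHermitian) :
    A.det.re = hA.eigenvalues 0 * hA.eigenvalues 1 * hA.eigenvalues 2 := by
  simp [hA.det_eq_prod_eigenvalues, Fin.prod_univ_three, ← Complex.ofReal_mul]

end Complex

end Matrix

theorem posDef_iff_crit_iv (A : Matrix (Fin 3) (Fin 3) ℂ) (hA : A.IsHermitian) :
    A.PosDef ↔
      (0 < (A 0 0).re + (A 1 1).re ∧ 0 < ((A 0 0).re * (A 1 1).re - Complex.normSq (A 0 1)) + ((A 0 0).re * (A 2 2).re - Complex.normSq (A 0 2)) + ((A 1 1).re * (A 2 2).re - Complex.normSq (A 1 2))) ∧ 0 < A.det.re := by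
  constructor
  · intro hPD
    have hdiag (i : Fin 3) : 0 < (A i i).re := (Complex.pos_iff.mp hPD.diag_pos).1
    have hminor {i j : Fin 3} (hij : i ≠ j) := hPD.re_mul_re_sub_normSq_pos hij
    refine ⟨⟨by linarith [hdiag 0, hdiag 1], ?_⟩, (Complex.pos_iff.mp hPD.det_pos).1⟩
    linarith [hminor (i := 0) (j := 1) (by decide), hminor (i := 0) (j := 2) (by decide),
      hminor (i := 1) (j := 2) (by decide)]
  · rintro ⟨⟨hdiag, hminor⟩, hdet⟩
    rw [hA.posDef_iff_eigenvalues_pos]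
    obtain ⟨k, hk⟩ := hA.exists_eigenvalues_le_re_apply_self 2
    refine forall_pos_of_sum_sub_pos_of_esymm_pos _ (k := k) ?_ ?_ ?_
    · rw [Fin.sum_univ_three, hA.sum_eigenvalues_fin_three]
      simp only [RCLike.re_to_complex] at hk
      linarith
    · rwa [hA.esymm_two_eigenvalues_fin_three]
    · rwa [← hA.re_det_eq_prod_eigenvalues]
end
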